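/- arXiv:2601.02817 — 2 statements merged into one kernel-verified Lean document; each statement's English description precedes it below -/
import Mathlib

section
/- Let θ ∈ [0, π/2) and let T be a bounded linear operator on H that is Berezin sectorial with semi-angle θ relative to K. Then for every t ∈ ℝ: ‖T*T‖_ber ≤ (1/4)·(sin θ + 1)²·(ber(T))² + (1/2)·( ‖(T − tI)*(T − tI)‖_ber + ‖(T − itI)*(T − itI)‖_ber ), where I is the identity operator on H; consequently the same bound holds with the infimum over t ∈ ℝ of the last term. -/
set_option maxHeartbeats 1000000


open scoped InnerProductSpace
open ContinuousLinearMap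

noncomputable section

variable {H : Type*} [NormedAddCommGroup H] [InnerProductSpace ℂ H] [CompleteSpace H]

/-- The Berezin number of `A` relative to a set `K` of unit vectors:
`ber(A) = sup_{x ∈ K} |⟨A x, x⟩|` (with the paper's inner product `⟨A x, x⟩ = ⟪x, A x⟫_ℂ`). -/
def berNum (K : Set H) (A : H →L[ℂ] H) : ℝ :=
  ⨆ x : K, ‖⟪(x : H), A x⟫_ℂ‖

/-- The Berezin norm of `A` relative to `K`: `‖A‖_ber = sup_{x, y ∈ K} |⟨A x, y⟩|`. -/
def berNorm (K : Set H) (A : H →L[ℂ] H) : ℝ :=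
  ⨆ x : K, ⨆ y : K, ‖⟪(y : H), A (x : H)⟫_ℂ‖

/-- The real part `Re(A) = (A + A*)/2` of an operator. -/
def reOp (A : H →L[ℂ] H) : H →L[ℂ] H := (2 : ℂ)⁻¹ • (A + adjoint A)

/-- The imaginary part `Im(A) = (A - A*)/(2i)` of an operator. -/
def imOp (A : H →L[ℂ] H) : H →L[ℂ] H := (2 * Complex.I)⁻¹ • (A - adjoint A)

/-- `A` is Berezin sectorial with semi-angle `θ` relative to `K`:
every Berezin symbol value `⟨A x, x⟩`, `x ∈ K`, lies in the sector `S_θ`. -/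
def BerSectorial (K : Set H) (θ : ℝ) (A : H →L[ℂ] H) : Prop :=
  ∀ x ∈ K, 0 ≤ (⟪x, A x⟫_ℂ).re ∧ |(⟪x, A x⟫_ℂ).im| ≤ Real.tan θ * (⟪x, A x⟫_ℂ).re

/-- `A ∈ Π_θ^{Ber,P}`: Berezin sectorial and both `Re(A)` and `Im(A)` satisfy
the Berezin number power inequality. -/
def BerSectorialP (K : Set H) (θ : ℝ) (A : H →L[ℂ] H) : Prop :=
  BerSectorial K θ A ∧
    ∀ n : ℕ, 0 < n →
      berNum K (reOp A ^ n) ≤ berNum K (reOp A) ^ n ∧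
      berNum K (imOp A ^ n) ≤ berNum K (imOp A) ^ n

private lemma abs_inner_le_opNorm' {K : Set H} (hKunit : ∀ x ∈ K, ‖x‖ = 1)
    (A : H →L[ℂ] H) (x y : K) : ‖⟪(y : H), A (x : H)⟫_ℂ‖ ≤ ‖A‖ := by
  calc ‖⟪(y : H), A (x : H)⟫_ℂ‖ ≤ ‖(y : H)‖ * ‖A (x : H)‖ := norm_inner_le_norm _ _
    _ ≤ ‖(y : H)‖ * (‖A‖ * ‖(x : H)‖) := by
        exact mul_le_mul_of_nonneg_left (A.le_opNorm _) (norm_nonneg _)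
    _ = ‖A‖ := by rw [hKunit x x.2, hKunit y y.2]; ring

private lemma le_berNorm' {K : Set H} (hKunit : ∀ x ∈ K, ‖x‖ = 1)
    (A : H →L[ℂ] H) (x y : K) :
    ‖⟪(y : H), A (x : H)⟫_ℂ‖ ≤ berNorm K A := by
  have hne : Nonempty ↥K := ⟨x⟩
  have h1 : ‖⟪(y : H), A (x : H)⟫_ℂ‖
      ≤ ⨆ y : K, ‖⟪(y : H), A (x : H)⟫_ℂ‖ :=
    le_ciSup ⟨‖A‖, by rintro _ ⟨y, rfl⟩; exact abs_inner_le_opNorm' hKunit A x y⟩ y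
  refine h1.trans (le_ciSup (f := fun x : K => ⨆ y : K, ‖⟪(y : H), A (x : H)⟫_ℂ‖)
    ⟨‖A‖, ?_⟩ x)
  rintro _ ⟨x, rfl⟩
  exact ciSup_le fun y => abs_inner_le_opNorm' hKunit A x y

private lemma berNorm_le' {K : Set H} (hK : K.Nonempty) (A : H →L[ℂ] H) {B : ℝ}
    (h : ∀ x y : K, ‖⟪(y : H), A (x : H)⟫_ℂ‖ ≤ B) : berNorm K A ≤ B := by
  have hne : Nonempty ↥K := hK.to_subtype
  exact ciSup_le fun x => ciSup_le fun y => h x y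

private lemma le_berNum' {K : Set H} (hKunit : ∀ x ∈ K, ‖x‖ = 1)
    (A : H →L[ℂ] H) (x : K) : ‖⟪(x : H), A (x : H)⟫_ℂ‖ ≤ berNum K A :=
  le_ciSup ⟨‖A‖, by rintro _ ⟨x, rfl⟩; exact abs_inner_le_opNorm' hKunit A x x⟩ x


/-- If `T` is Berezin sectorial with semi-angle `θ ∈ [0, π/2)` relative to
`K`, then for every real `t`,
`‖T*T‖_ber ≤ (1/4)(sin θ + 1)² ber(T)² + (1/2)(‖|T − tI|²‖_ber + ‖|T − itI|²‖_ber)`,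
and consequently the same bound holds with the infimum over `t ∈ ℝ` of the last term. -/
theorem berezin_sectorial_norm_square_upper_bound
    (K : Set H) (hK : K.Nonempty) (hKunit : ∀ x ∈ K, ‖x‖ = 1)
    (θ : ℝ) (hθ : θ ∈ Set.Ico 0 (Real.pi / 2))
    (T : H →L[ℂ] H) (hT : BerSectorial K θ T) :
    (∀ t : ℝ,
      berNorm K (adjoint T * T) ≤
        (1 / 4) * (Real.sin θ + 1) ^ 2 * (berNum K T) ^ 2
          + (1 / 2) * (berNorm K (adjoint (T - (t : ℂ) • (1 : H →L[ℂ] H)) *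
                (T - (t : ℂ) • (1 : H →L[ℂ] H)))
              + berNorm K (adjoint (T - (Complex.I * t) • (1 : H →L[ℂ] H)) *
                (T - (Complex.I * t) • (1 : H →L[ℂ] H))))) ∧
    berNorm K (adjoint T * T) ≤
      (1 / 4) * (Real.sin θ + 1) ^ 2 * (berNum K T) ^ 2
        + (1 / 2) * ⨅ t : ℝ,
            (berNorm K (adjoint (T - (t : ℂ) • (1 : H →L[ℂ] H)) *
                (T - (t : ℂ) • (1 : H →L[ℂ] H)))
              + berNorm K (adjoint (T - (Complex.I * t) • (1 : H →L[ℂ] H)) *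
                (T - (Complex.I * t) • (1 : H →L[ℂ] H)))) := by
  obtain ⟨x₀, hx₀⟩ := hK
  have hπ : (0:ℝ) < Real.pi := Real.pi_pos
  have hθ0 : 0 ≤ θ := hθ.1
  have hθ2 : θ < Real.pi / 2 := hθ.2
  have hs0 : 0 ≤ Real.sin θ := Real.sin_nonneg_of_nonneg_of_le_pi hθ0 (by linarith)
  have hcos : 0 < Real.cos θ := Real.cos_pos_of_mem_Ioo ⟨by linarith, hθ2⟩
  set s := Real.sin θ with hs
  set ber := berNum K T with hberdef
  have hber0 : 0 ≤ ber := by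
    refine le_trans (norm_nonneg _) (le_berNum' hKunit T ⟨x₀, hx₀⟩)
  -- key pointwise bound
  have key : ∀ t : ℝ, ∀ x : K,
      ‖T (x : H)‖ ^ 2 ≤ (1/4) * (s+1)^2 * ber^2
        + (1/2) * (‖(T - (t:ℂ) • (1 : H →L[ℂ] H)) (x : H)‖^2
            + ‖(T - (Complex.I * t) • (1 : H →L[ℂ] H)) (x : H)‖^2) := by
    intro t x
    have hx1 : ‖(x : H)‖ = 1 := hKunit x x.2
    set z := ⟪(x : H), T (x : H)⟫_ℂ with hz
    obtain ⟨ha0, hab⟩ := hT x x.2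
    set a := z.re with haa
    set b := z.im with hbb
    set r := ‖z‖ with hrr
    have hr0 : 0 ≤ r := norm_nonneg z
    have hrber : r ≤ ber := le_berNum' hKunit T x
    have haR : a ≤ r := Complex.re_le_norm z
    have hr2 : r^2 = a^2 + b^2 := by
      rw [hrr, Complex.sq_norm, Complex.normSq_apply, haa, hbb]; ring
    -- |b| ≤ s * r
    have hcb : Real.cos θ * |b| ≤ s * a := by
      have h := mul_le_mul_of_nonneg_left hab hcos.le
      rw [Real.tan_eq_sin_div_cos] at h
      have he : Real.cos θ * (Real.sin θ / Real.cos θ * a) = s * a := by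
        rw [hs]; field_simp
      linarith [h, he.le, he.ge]
    have hb2 : b^2 ≤ s^2 * r^2 := by
      have h1 : (Real.cos θ * |b|)^2 ≤ (s * a)^2 := by
        have h2 : 0 ≤ Real.cos θ * |b| := mul_nonneg hcos.le (abs_nonneg b)
        nlinarith
      have hpyth : Real.sin θ ^ 2 + Real.cos θ ^ 2 = 1 := Real.sin_sq_add_cos_sq θ
      have hsb : (|b|)^2 = b^2 := sq_abs b
      nlinarith
    have hbr : |b| ≤ s * r := by
      nlinarith [abs_nonneg b, mul_nonneg hs0 hr0, sq_abs b]
    -- (a+b)^2 ≤ (s+1)^2 * r^2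
    have hsum : (a + b)^2 ≤ (s+1)^2 * r^2 := by
      have h1 : |a + b| ≤ (s+1) * r := by
        calc |a + b| ≤ |a| + |b| := abs_add_le a b
          _ ≤ r + s * r := by rw [abs_of_nonneg ha0]; linarith
          _ = (s+1) * r := by ring
      nlinarith [abs_nonneg (a+b), sq_abs (a+b), mul_nonneg (by linarith : (0:ℝ) ≤ s+1) hr0]
    -- norm expansions
    have hap1 : (T - (t:ℂ) • (1 : H →L[ℂ] H)) (x : H) = T x - (t:ℂ) • (x : H) := by
      simp [ContinuousLinearMap.sub_apply]
    have hap2 : (T - (Complex.I * t) • (1 : H →L[ℂ] H)) (x : H)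
        = T x - (Complex.I * t) • (x : H) := by
      simp [ContinuousLinearMap.sub_apply]
    have hinnerc : ∀ c : ℂ, ‖T (x : H) - c • (x : H)‖^2
        = ‖T (x : H)‖^2 - 2 * (c * (starRingEnd ℂ) z).re + ‖c‖ ^ 2 := by
      intro c
      have h := @norm_sub_sq ℂ H _ _ _ (T (x : H)) (c • (x : H))
      have hsm : ⟪T (x : H), c • (x : H)⟫_ℂ = c * (starRingEnd ℂ) z := by
        rw [inner_smul_right, hz, ← inner_conj_symm]
      have hns : ‖c • (x : H)‖^2 = ‖c‖ ^ 2 := by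
        rw [norm_smul, hx1, mul_one]
      rw [hsm] at h
      simpa [hns] using h
    have hn1 : ‖(T - (t:ℂ) • (1 : H →L[ℂ] H)) (x : H)‖^2
        = ‖T (x : H)‖^2 - 2 * t * a + t^2 := by
      rw [hap1, hinnerc (t:ℂ)]
      have : (((t:ℂ)) * (starRingEnd ℂ) z).re = t * a := by
        simp [Complex.mul_re, haa, hbb]
      rw [this, Complex.norm_real, Real.norm_eq_abs, sq_abs]
      ring
    have hn2 : ‖(T - (Complex.I * t) • (1 : H →L[ℂ] H)) (x : H)‖^2
        = ‖T (x : H)‖^2 - 2 * t * b + t^2 := by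
      rw [hap2, hinnerc (Complex.I * t)]
      have h1 : ((Complex.I * t) * (starRingEnd ℂ) z).re = t * b := by
        simp only [Complex.mul_re, Complex.mul_im, Complex.I_re, Complex.I_im,
          Complex.ofReal_re, Complex.ofReal_im, RingHomCompTriple.comp_apply,
          Complex.conj_re, Complex.conj_im, haa, hbb]
        ring
      have h2 : ‖Complex.I * t‖ ^ 2 = t^2 := by
        simp [map_mul, Complex.norm_real, sq_abs]
      rw [h1, h2]; ring
    -- combine
    have hcorr : t * (a + b) - t^2 ≤ (1/4) * (s+1)^2 * ber^2 := by
      have h1 : t * (a+b) - t^2 ≤ (a+b)^2 / 4 := by nlinarith [sq_nonneg (a + b - 2*t)]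
      have h2 : r^2 ≤ ber^2 := by nlinarith
      nlinarith [sq_nonneg (s+1)]
    rw [hn1, hn2]; linarith
  -- the ∀ t statement
  have main : ∀ t : ℝ,
      berNorm K (adjoint T * T) ≤
        (1 / 4) * (s + 1) ^ 2 * ber ^ 2
          + (1 / 2) * (berNorm K (adjoint (T - (t : ℂ) • (1 : H →L[ℂ] H)) *
                (T - (t : ℂ) • (1 : H →L[ℂ] H)))
              + berNorm K (adjoint (T - (Complex.I * t) • (1 : H →L[ℂ] H)) *
                (T - (Complex.I * t) • (1 : H →L[ℂ] H)))) := by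
    intro t
    set A1 := T - (t : ℂ) • (1 : H →L[ℂ] H) with hA1
    set A2 := T - (Complex.I * t) • (1 : H →L[ℂ] H) with hA2
    have hsq : ∀ (A : H →L[ℂ] H) (x : K),
        ‖A (x : H)‖^2 ≤ berNorm K (adjoint A * A) := by
      intro A x
      have he : ⟪(x : H), (adjoint A * A) (x : H)⟫_ℂ = (‖A (x : H)‖ : ℂ)^2 := by
        rw [ContinuousLinearMap.mul_apply, adjoint_inner_right, inner_self_eq_norm_sq_to_K]
        norm_cast
      have h := le_berNorm' hKunit (adjoint A * A) x x
      rw [he] at h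
      simpa [map_pow, Complex.norm_real, abs_of_nonneg (norm_nonneg _)] using h
    refine berNorm_le' ⟨x₀, hx₀⟩ _ (fun x y => ?_)
    have hxk := key t x
    have hyk := key t y
    have hn1x := hsq A1 x
    have hn2x := hsq A2 x
    have hn1y := hsq A1 y
    have hn2y := hsq A2 y
    have hcs : ‖⟪(y : H), (adjoint T * T) (x : H)⟫_ℂ‖ ≤ ‖T (y:H)‖ * ‖T (x:H)‖ := by
      rw [ContinuousLinearMap.mul_apply, adjoint_inner_right]
      exact norm_inner_le_norm _ _
    refine hcs.trans ?_
    nlinarith [sq_nonneg (‖T (y:H)‖ - ‖T (x:H)‖)]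
  refine ⟨main, ?_⟩
  set L := berNorm K (adjoint T * T) with hL
  set C := (1/4) * (s+1)^2 * ber^2 with hC
  have h2 : ∀ t : ℝ, 2 * (L - C) ≤
      (berNorm K (adjoint (T - (t : ℂ) • (1 : H →L[ℂ] H)) * (T - (t : ℂ) • (1 : H →L[ℂ] H)))
        + berNorm K (adjoint (T - (Complex.I * t) • (1 : H →L[ℂ] H)) *
            (T - (Complex.I * t) • (1 : H →L[ℂ] H)))) := by
    intro t; linarith [main t]
  have h3 := le_ciInf h2
  linarith
end
end

section
/- Let θ ∈ (0, π/2) and let S, T ∈ Π_θ^{Ber,P} relative to K. Then for each choice of sign ±: ber(ST ± TS) ≤ min{β₁, β₂}, where β₁ = 2 sin(θ)·(‖T*T + TT*‖_ber)^{1/2}·( (ber(S))² − (1/(2 sin²θ))·((ber(Im(S)))² − (ber(Re(S)))²) )^{1/2} and β₂ = 2 sin(θ)·(‖S*S + SS*‖_ber)^{1/2}·( (ber(T))² − (1/(2 sin²θ))·((ber(Im(T)))² − (ber(Re(T)))²) )^{1/2}. -/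
open scoped InnerProductSpace
open ContinuousLinearMap

noncomputable section

variable {H : Type*} [NormedAddCommGroup H] [InnerProductSpace ℂ H] [CompleteSpace H]

private lemma berAux_conj_two : (starRingEnd ℂ) 2 = 2 := Complex.conj_ofNat 2

private lemma berAux_reOp_inner (S : H →L[ℂ] H) (x y : H) :
    ⟪x, reOp S y⟫_ℂ = ⟪reOp S x, y⟫_ℂ := by
  simp only [reOp, ContinuousLinearMap.smul_apply, ContinuousLinearMap.add_apply,
    inner_smul_right, inner_smul_left, inner_add_right, inner_add_left,
    ContinuousLinearMap.adjoint_inner_right, ← ContinuousLinearMap.adjoint_inner_left,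
    ContinuousLinearMap.adjoint_adjoint, map_inv₀, berAux_conj_two]
  ring

private lemma berAux_imOp_inner (S : H →L[ℂ] H) (x y : H) :
    ⟪x, imOp S y⟫_ℂ = ⟪imOp S x, y⟫_ℂ := by
  simp only [imOp, ContinuousLinearMap.smul_apply, ContinuousLinearMap.sub_apply,
    inner_smul_right, inner_smul_left, inner_sub_right, inner_sub_left,
    ContinuousLinearMap.adjoint_inner_right, ← ContinuousLinearMap.adjoint_inner_left,
    ContinuousLinearMap.adjoint_adjoint, map_inv₀, map_mul, Complex.conj_I, berAux_conj_two]
  have hI : Complex.I ≠ 0 := Complex.I_ne_zero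
  field_simp
  ring

private lemma berAux_abs_le (A : H →L[ℂ] H) {x y : H} (hx : ‖x‖ = 1) (hy : ‖y‖ = 1) :
    ‖⟪y, A x⟫_ℂ‖ ≤ ‖A‖ := by
  calc ‖⟪y, A x⟫_ℂ‖ ≤ ‖y‖ * ‖A x‖ := norm_inner_le_norm _ _
    _ ≤ ‖y‖ * (‖A‖ * ‖x‖) := by gcongr; exact A.le_opNorm x
    _ = ‖A‖ := by rw [hx, hy]; ring

private lemma berAux_le_berNum (K : Set H) (hKunit : ∀ x ∈ K, ‖x‖ = 1) (A : H →L[ℂ] H)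
    {x : H} (hx : x ∈ K) : ‖⟪x, A x⟫_ℂ‖ ≤ berNum K A := by
  have hdef : berNum K A = ⨆ y : K, ‖⟪(y : H), A y⟫_ℂ‖ := rfl
  rw [hdef]
  exact le_ciSup_of_le
    ⟨‖A‖, by rintro r ⟨y, rfl⟩; exact berAux_abs_le A (hKunit y y.2) (hKunit y y.2)⟩
    (⟨x, hx⟩ : K) le_rfl

private lemma berAux_berNum_le (K : Set H) (hK : K.Nonempty) (A : H →L[ℂ] H) {c : ℝ}
    (h : ∀ x ∈ K, ‖⟪x, A x⟫_ℂ‖ ≤ c) : berNum K A ≤ c := by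
  have : Nonempty K := hK.to_subtype
  exact ciSup_le fun x => h x x.2

private lemma berAux_le_berNorm (K : Set H) (hKunit : ∀ x ∈ K, ‖x‖ = 1) (A : H →L[ℂ] H)
    {x : H} (hx : x ∈ K) : ‖⟪x, A x⟫_ℂ‖ ≤ berNorm K A := by
  have hdef : berNorm K A = ⨆ z : K, ⨆ y : K, ‖⟪(y : H), A (z : H)⟫_ℂ‖ := rfl
  have h1 : ‖⟪x, A x⟫_ℂ‖ ≤ ⨆ y : K, ‖⟪(y : H), A x⟫_ℂ‖ :=
    le_ciSup_of_le
      ⟨‖A‖, by rintro r ⟨y, rfl⟩; exact berAux_abs_le A (hKunit x hx) (hKunit y y.2)⟩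
      (⟨x, hx⟩ : K) le_rfl
  rw [hdef]
  refine h1.trans (le_ciSup_of_le ?_ (⟨x, hx⟩ : K) le_rfl)
  refine ⟨‖A‖, ?_⟩
  rintro r ⟨z, rfl⟩
  have : Nonempty K := ⟨z⟩
  exact ciSup_le fun y => berAux_abs_le A (hKunit z z.2) (hKunit y y.2)

private lemma berAux_cauchy2 {a b c d : ℝ} (ha : 0 ≤ a) (hb : 0 ≤ b) (hc : 0 ≤ c)
    (hd : 0 ≤ d) :
    a * b + c * d ≤ Real.sqrt (a ^ 2 + c ^ 2) * Real.sqrt (b ^ 2 + d ^ 2) := by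
  have key : (a * b + c * d) * (a * b + c * d) ≤ (a ^ 2 + c ^ 2) * (b ^ 2 + d ^ 2) := by
    nlinarith [sq_nonneg (a * d - c * b)]
  calc a * b + c * d = Real.sqrt ((a * b + c * d) * (a * b + c * d)) :=
        (Real.sqrt_mul_self (by positivity)).symm
    _ ≤ Real.sqrt ((a ^ 2 + c ^ 2) * (b ^ 2 + d ^ 2)) := Real.sqrt_le_sqrt key
    _ = _ := Real.sqrt_mul (by positivity) _

private lemma berAux_sum_sq (S : H →L[ℂ] H) (x : H) :
    ‖S x‖ ^ 2 + ‖adjoint S x‖ ^ 2 = 2 * ‖reOp S x‖ ^ 2 + 2 * ‖imOp S x‖ ^ 2 := by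
  have hre : ‖reOp S x‖ = (1 / 2) * ‖S x + adjoint S x‖ := by
    have h : reOp S x = (2 : ℂ)⁻¹ • (S x + adjoint S x) := rfl
    rw [h, norm_smul, norm_inv]
    norm_num
  have him : ‖imOp S x‖ = (1 / 2) * ‖S x - adjoint S x‖ := by
    have h : imOp S x = (2 * Complex.I)⁻¹ • (S x - adjoint S x) := rfl
    rw [h, norm_smul, norm_inv, norm_mul, Complex.norm_I]
    norm_num
  have hpar := parallelogram_law_with_norm ℂ (S x) (adjoint S x)
  rw [hre, him]
  nlinarith [hpar]

private lemma berAux_inner_reOp_sq (S : H →L[ℂ] H) (x : H) :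
    ⟪x, (reOp S ^ 2) x⟫_ℂ = ((‖reOp S x‖ ^ 2 : ℝ) : ℂ) := by
  rw [pow_two, ContinuousLinearMap.mul_apply, berAux_reOp_inner,
    inner_self_eq_norm_sq_to_K]
  norm_cast

private lemma berAux_inner_imOp_sq (S : H →L[ℂ] H) (x : H) :
    ⟪x, (imOp S ^ 2) x⟫_ℂ = ((‖imOp S x‖ ^ 2 : ℝ) : ℂ) := by
  rw [pow_two, ContinuousLinearMap.mul_apply, berAux_imOp_inner,
    inner_self_eq_norm_sq_to_K]
  norm_cast

private lemma berAux_inner_imOp (S : H →L[ℂ] H) (x : H) :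
    ⟪x, imOp S x⟫_ℂ = ((⟪x, S x⟫_ℂ).im : ℂ) := by
  simp only [imOp, ContinuousLinearMap.smul_apply, ContinuousLinearMap.sub_apply,
    inner_smul_right, inner_sub_right, ContinuousLinearMap.adjoint_inner_right]
  rw [← inner_conj_symm (S x) x, Complex.sub_conj]
  have hI : Complex.I ≠ 0 := Complex.I_ne_zero
  field_simp
  push_cast
  ring

private lemma berAux_im_le_sin {θ : ℝ} (hθ1 : 0 < θ) (hθ2 : θ < Real.pi / 2) {z : ℂ}
    (hre : 0 ≤ z.re) (him : |z.im| ≤ Real.tan θ * z.re) :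
    |z.im| ≤ Real.sin θ * ‖z‖ := by
  have hpi := Real.pi_pos
  have hc : 0 < Real.cos θ := Real.cos_pos_of_mem_Ioo ⟨by linarith, hθ2⟩
  have hs : 0 ≤ Real.sin θ := Real.sin_nonneg_of_nonneg_of_le_pi hθ1.le (by linarith)
  have h2 : |z.im| * Real.cos θ ≤ Real.sin θ * z.re := by
    rw [Real.tan_eq_sin_div_cos, div_mul_eq_mul_div, le_div_iff₀ hc] at him
    exact him
  have key2 : z.im ^ 2 ≤ Real.sin θ ^ 2 * (z.re ^ 2 + z.im ^ 2) := by
    nlinarith [mul_self_le_mul_self (by positivity : (0:ℝ) ≤ |z.im| * Real.cos θ) h2,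
      Real.sin_sq_add_cos_sq θ, sq_abs z.im, sq_nonneg z.im]
  have habs : ‖z‖ = Real.sqrt (z.re ^ 2 + z.im ^ 2) := by
    rw [Complex.norm_def, Complex.normSq_apply]
    congr 1
    ring
  calc |z.im| = Real.sqrt (z.im ^ 2) := (Real.sqrt_sq_eq_abs _).symm
    _ ≤ Real.sqrt (Real.sin θ ^ 2 * (z.re ^ 2 + z.im ^ 2)) := Real.sqrt_le_sqrt key2
    _ = Real.sin θ * Real.sqrt (z.re ^ 2 + z.im ^ 2) := by
        rw [Real.sqrt_mul (sq_nonneg _), Real.sqrt_sq hs]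
    _ = Real.sin θ * ‖z‖ := by rw [habs]

set_option maxHeartbeats 2000000 in
/-- If `S, T ∈ Π_θ^{Ber,P}` with `θ ∈ (0, π/2)`, then for each sign
`ε = ±1`, `ber(ST ± TS) ≤ min{β₁, β₂}` where
`β₁ = 2 sin θ ‖T*T + TT*‖_ber^{1/2} (ber S² − (1/(2 sin²θ))(ber(Im S)² − ber(Re S)²))^{1/2}`
and `β₂` is the same with `S` and `T` interchanged. -/
theorem berezin_sectorialP_commutator_min_bound
    (K : Set H) (hK : K.Nonempty) (hKunit : ∀ x ∈ K, ‖x‖ = 1)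
    (θ : ℝ) (hθ : θ ∈ Set.Ioo 0 (Real.pi / 2))
    (S T : H →L[ℂ] H) (hS : BerSectorialP K θ S) (hT : BerSectorialP K θ T)
    (ε : ℝ) (hε : ε = 1 ∨ ε = -1) :
    berNum K (S * T + (ε : ℂ) • (T * S)) ≤
      min
        (2 * Real.sin θ *
          Real.sqrt (berNorm K (adjoint T * T + T * adjoint T)) *
          Real.sqrt ((berNum K S) ^ 2 - (2 * Real.sin θ ^ 2)⁻¹ *
            ((berNum K (imOp S)) ^ 2 - (berNum K (reOp S)) ^ 2)))
        (2 * Real.sin θ *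
          Real.sqrt (berNorm K (adjoint S * S + S * adjoint S)) *
          Real.sqrt ((berNum K T) ^ 2 - (2 * Real.sin θ ^ 2)⁻¹ *
            ((berNum K (imOp T)) ^ 2 - (berNum K (reOp T)) ^ 2))) := by
  obtain ⟨hθ1, hθ2⟩ := hθ
  have hpi := Real.pi_pos
  have hs : 0 < Real.sin θ := Real.sin_pos_of_pos_of_lt_pi hθ1 (by linarith)
  -- nonnegativity of Berezin numbers
  have hber_nonneg : ∀ A : H →L[ℂ] H, 0 ≤ berNum K A := by
    intro A
    obtain ⟨x, hx⟩ := hK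
    exact (norm_nonneg _).trans (berAux_le_berNum K hKunit A hx)
  -- ber(Im X) ≤ sin θ · ber X
  have hIm : ∀ X : H →L[ℂ] H, BerSectorial K θ X →
      berNum K (imOp X) ≤ Real.sin θ * berNum K X := by
    intro X hX
    apply berAux_berNum_le K hK
    intro x hx
    rw [berAux_inner_imOp, Complex.norm_real, Real.norm_eq_abs]
    calc |(⟪x, X x⟫_ℂ).im| ≤ Real.sin θ * ‖⟪x, X x⟫_ℂ‖ :=
          berAux_im_le_sin hθ1 hθ2 (hX x hx).1 (hX x hx).2
      _ ≤ Real.sin θ * berNum K X := by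
          exact mul_le_mul_of_nonneg_left (berAux_le_berNum K hKunit X hx) hs.le
  -- pointwise bound for the "sectorial" factor
  have hAX : ∀ X : H →L[ℂ] H, BerSectorialP K θ X → ∀ x ∈ K,
      ‖X x‖ ^ 2 + ‖adjoint X x‖ ^ 2 ≤
        4 * Real.sin θ ^ 2 * ((berNum K X) ^ 2 - (2 * Real.sin θ ^ 2)⁻¹ *
          ((berNum K (imOp X)) ^ 2 - (berNum K (reOp X)) ^ 2)) := by
    intro X hX x hx
    have hre2 : ‖reOp X x‖ ^ 2 ≤ (berNum K (reOp X)) ^ 2 := by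
      have h1 : (‖reOp X x‖ ^ 2 : ℝ) = ‖⟪x, (reOp X ^ 2) x⟫_ℂ‖ := by
        rw [berAux_inner_reOp_sq, Complex.norm_real, Real.norm_eq_abs, abs_of_nonneg (by positivity)]
      rw [h1]
      exact (berAux_le_berNum K hKunit _ hx).trans (hX.2 2 two_pos).1
    have him2 : ‖imOp X x‖ ^ 2 ≤ (berNum K (imOp X)) ^ 2 := by
      have h1 : (‖imOp X x‖ ^ 2 : ℝ) = ‖⟪x, (imOp X ^ 2) x⟫_ℂ‖ := by
        rw [berAux_inner_imOp_sq, Complex.norm_real, Real.norm_eq_abs, abs_of_nonneg (by positivity)]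
      rw [h1]
      exact (berAux_le_berNum K hKunit _ hx).trans (hX.2 2 two_pos).2
    have hb : berNum K (imOp X) ≤ Real.sin θ * berNum K X := hIm X hX.1
    have hb0 : 0 ≤ berNum K (imOp X) := hber_nonneg _
    have hN0 : 0 ≤ berNum K X := hber_nonneg _
    have hsum := berAux_sum_sq X x
    have hexp : 4 * Real.sin θ ^ 2 * ((berNum K X) ^ 2 - (2 * Real.sin θ ^ 2)⁻¹ *
        ((berNum K (imOp X)) ^ 2 - (berNum K (reOp X)) ^ 2)) =
        4 * Real.sin θ ^ 2 * (berNum K X) ^ 2 -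
          2 * ((berNum K (imOp X)) ^ 2 - (berNum K (reOp X)) ^ 2) := by
      field_simp
      ring
    rw [hsum, hexp]
    nlinarith [mul_self_le_mul_self hb0 hb]
  -- the C expressions are nonnegative
  have hC : ∀ X : H →L[ℂ] H, BerSectorialP K θ X →
      0 ≤ (berNum K X) ^ 2 - (2 * Real.sin θ ^ 2)⁻¹ *
        ((berNum K (imOp X)) ^ 2 - (berNum K (reOp X)) ^ 2) := by
    intro X hX
    obtain ⟨x, hx⟩ := hK
    have h1 := hAX X hX x hx
    have h2 : (0:ℝ) ≤ ‖X x‖ ^ 2 + ‖adjoint X x‖ ^ 2 := by positivity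
    have h4 : (0:ℝ) < 4 * Real.sin θ ^ 2 := by positivity
    by_contra hcon
    push_neg at hcon
    have := mul_neg_of_pos_of_neg h4 hcon
    linarith
  -- the Berezin-norm factor
  have hBN : ∀ X : H →L[ℂ] H, ∀ x ∈ K,
      ‖X x‖ ^ 2 + ‖adjoint X x‖ ^ 2 ≤ berNorm K (adjoint X * X + X * adjoint X) := by
    intro X x hx
    have h1 : ⟪x, (adjoint X * X + X * adjoint X) x⟫_ℂ =
        ((‖X x‖ ^ 2 + ‖adjoint X x‖ ^ 2 : ℝ) : ℂ) := by
      simp only [ContinuousLinearMap.add_apply, ContinuousLinearMap.mul_apply,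
        inner_add_right, ContinuousLinearMap.adjoint_inner_right]
      rw [← ContinuousLinearMap.adjoint_inner_left X (adjoint X x) x]
      rw [inner_self_eq_norm_sq_to_K, inner_self_eq_norm_sq_to_K]
      norm_cast
    have h2 : (‖X x‖ ^ 2 + ‖adjoint X x‖ ^ 2 : ℝ) =
        ‖⟪x, (adjoint X * X + X * adjoint X) x⟫_ℂ‖ := by
      rw [h1, Complex.norm_real, Real.norm_eq_abs, abs_of_nonneg (by positivity)]
    rw [h2]
    exact berAux_le_berNorm K hKunit _ hx
  -- pointwise Cauchy–Schwarz bound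
  have hkey : ∀ x ∈ K, ‖⟪x, (S * T + (ε : ℂ) • (T * S)) x⟫_ℂ‖ ≤
      Real.sqrt (‖S x‖ ^ 2 + ‖adjoint S x‖ ^ 2) *
        Real.sqrt (‖T x‖ ^ 2 + ‖adjoint T x‖ ^ 2) := by
    intro x hx
    have hεabs : ‖(ε : ℂ)‖ = 1 := by rcases hε with h | h <;> simp [h]
    have expand : ⟪x, (S * T + (ε : ℂ) • (T * S)) x⟫_ℂ =
        ⟪adjoint S x, T x⟫_ℂ + (ε : ℂ) * ⟪adjoint T x, S x⟫_ℂ := by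
      simp only [ContinuousLinearMap.add_apply, ContinuousLinearMap.smul_apply,
        ContinuousLinearMap.mul_apply, inner_add_right, inner_smul_right,
        ContinuousLinearMap.adjoint_inner_left]
    rw [expand]
    calc ‖⟪adjoint S x, T x⟫_ℂ + (ε : ℂ) * ⟪adjoint T x, S x⟫_ℂ‖
        ≤ ‖⟪adjoint S x, T x⟫_ℂ‖ +
            ‖(ε : ℂ) * ⟪adjoint T x, S x⟫_ℂ‖ := norm_add_le _ _
      _ = ‖⟪adjoint S x, T x⟫_ℂ‖ + ‖⟪adjoint T x, S x⟫_ℂ‖ := by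
          rw [norm_mul, hεabs, one_mul]
      _ ≤ ‖adjoint S x‖ * ‖T x‖ + ‖S x‖ * ‖adjoint T x‖ := by
          have g1 := norm_inner_le_norm (𝕜 := ℂ) (adjoint S x) (T x)
          have g2 := norm_inner_le_norm (𝕜 := ℂ) (adjoint T x) (S x)
          rw [mul_comm (‖adjoint T x‖)] at g2
          exact add_le_add g1 g2
      _ ≤ Real.sqrt (‖adjoint S x‖ ^ 2 + ‖S x‖ ^ 2) *
            Real.sqrt (‖T x‖ ^ 2 + ‖adjoint T x‖ ^ 2) :=
          berAux_cauchy2 (norm_nonneg _) (norm_nonneg _) (norm_nonneg _) (norm_nonneg _)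
      _ = Real.sqrt (‖S x‖ ^ 2 + ‖adjoint S x‖ ^ 2) *
            Real.sqrt (‖T x‖ ^ 2 + ‖adjoint T x‖ ^ 2) := by rw [add_comm (‖adjoint S x‖ ^ 2)]
  -- assemble
  have hsqrt4 : ∀ C : ℝ, 0 ≤ C → Real.sqrt (4 * Real.sin θ ^ 2 * C) =
      2 * Real.sin θ * Real.sqrt C := by
    intro C hC0
    rw [show 4 * Real.sin θ ^ 2 * C = (2 * Real.sin θ) ^ 2 * C by ring,
      Real.sqrt_mul (sq_nonneg _), Real.sqrt_sq (by positivity)]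
  set CS := (berNum K S) ^ 2 - (2 * Real.sin θ ^ 2)⁻¹ *
    ((berNum K (imOp S)) ^ 2 - (berNum K (reOp S)) ^ 2) with hCS
  set CT := (berNum K T) ^ 2 - (2 * Real.sin θ ^ 2)⁻¹ *
    ((berNum K (imOp T)) ^ 2 - (berNum K (reOp T)) ^ 2) with hCT
  refine le_min ?_ ?_
  · apply berAux_berNum_le K hK
    intro x hx
    calc ‖⟪x, (S * T + (ε : ℂ) • (T * S)) x⟫_ℂ‖
        ≤ Real.sqrt (‖S x‖ ^ 2 + ‖adjoint S x‖ ^ 2) *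
            Real.sqrt (‖T x‖ ^ 2 + ‖adjoint T x‖ ^ 2) := hkey x hx
      _ ≤ Real.sqrt (4 * Real.sin θ ^ 2 * CS) *
            Real.sqrt (berNorm K (adjoint T * T + T * adjoint T)) := by
          apply mul_le_mul (Real.sqrt_le_sqrt (hAX S hS x hx))
            (Real.sqrt_le_sqrt (hBN T x hx)) (Real.sqrt_nonneg _) (Real.sqrt_nonneg _)
      _ = 2 * Real.sin θ * Real.sqrt (berNorm K (adjoint T * T + T * adjoint T)) *
            Real.sqrt CS := by rw [hsqrt4 CS (hC S hS)]; ring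
  · apply berAux_berNum_le K hK
    intro x hx
    calc ‖⟪x, (S * T + (ε : ℂ) • (T * S)) x⟫_ℂ‖
        ≤ Real.sqrt (‖S x‖ ^ 2 + ‖adjoint S x‖ ^ 2) *
            Real.sqrt (‖T x‖ ^ 2 + ‖adjoint T x‖ ^ 2) := hkey x hx
      _ ≤ Real.sqrt (berNorm K (adjoint S * S + S * adjoint S)) *
            Real.sqrt (4 * Real.sin θ ^ 2 * CT) := by
          apply mul_le_mul (Real.sqrt_le_sqrt (hBN S x hx))
            (Real.sqrt_le_sqrt (hAX T hT x hx)) (Real.sqrt_nonneg _) (Real.sqrt_nonneg _)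
      _ = 2 * Real.sin θ * Real.sqrt (berNorm K (adjoint S * S + S * adjoint S)) *
            Real.sqrt CT := by rw [hsqrt4 CT (hC T hT)]; ring
end
end
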